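/- Let F : ℝᵈ → ℝ be a convex function and x, y ∈ ℝᵈ. The following are equivalent: (1) ∂F(x) ∩ ∂F(y) = ∂F(t·x + (1−t)·y) for every t ∈ (0,1); (1') ∂F(x) ∩ ∂F(y) = ∂F(t·x + (1−t)·y) for some t ∈ (0,1); (2) ∂F(x) ∩ ∂F(y) ≠ ∅; (3) t·F(x) + (1−t)·F(y) = F(t·x + (1−t)·y) for every t ∈ (0,1); (3') t·F(x) + (1−t)·F(y) = F(t·x + (1−t)·y) for some t ∈ (0,1). -/

import Mathlib

open scoped RealInnerProductSpace

/-- The subdifferential of a function `Φ : ℝᵈ → ℝ` at `x`. -/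
def subdiff {d : ℕ} (Φ : EuclideanSpace ℝ (Fin d) → ℝ) (x : EuclideanSpace ℝ (Fin d)) :
    Set (EuclideanSpace ℝ (Fin d)) :=
  {v | ∀ y, Φ x + ⟪v, y - x⟫ ≤ Φ y}

/-- A finite-valued convex function on Euclidean space has a subgradient everywhere. -/
theorem subdiff_nonempty {d : ℕ} (F : EuclideanSpace ℝ (Fin d) → ℝ)
    (hF : ConvexOn ℝ Set.univ F) (z : EuclideanSpace ℝ (Fin d)) :
    (subdiff F z).Nonempty := by
  classical
  have hcont : Continuous F := by
    have := hF.continuousOn isOpen_univ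
    rwa [continuousOn_univ] at this
  set s : Set (EuclideanSpace ℝ (Fin d) × ℝ) := {p | F p.1 < p.2} with hs_def
  have hsopen : IsOpen s := isOpen_lt (hcont.comp continuous_fst) continuous_snd
  have hsconv : Convex ℝ s := by
    rintro ⟨a, r⟩ ha ⟨b, q⟩ hb t u ht hu htu
    simp only [hs_def, Set.mem_setOf_eq] at ha hb ⊢
    have hcx : F (t • a + u • b) ≤ t * F a + u * F b := by
      simpa [smul_eq_mul] using hF.2 (Set.mem_univ a) (Set.mem_univ b) ht hu htu
    have : t * F a + u * F b < t * r + u * q := by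
      rcases eq_or_lt_of_le ht with h | h
      · have hu1 : u = 1 := by linarith
        simp [← h, hu1]; linarith
      · nlinarith [mul_le_mul_of_nonneg_left hb.le hu, mul_lt_mul_of_pos_left ha h]
    calc F ((t • (a, r) + u • (b, q)).1) = F (t • a + u • b) := by rfl
      _ < t * r + u * q := lt_of_le_of_lt hcx this
  have hzs : (z, F z) ∉ s := by simp [hs_def]
  obtain ⟨f, hf⟩ := geometric_hahn_banach_open_point hsconv hsopen hzs
  set c : ℝ := f (0, 1) with hc_def
  have hadd : ∀ (w : EuclideanSpace ℝ (Fin d)) (r ε : ℝ), f (w, r + ε) = f (w, r) + ε * c := by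
    intro w r ε
    have : ((w, r + ε) : EuclideanSpace ℝ (Fin d) × ℝ) = (w, r) + ε • (0, 1) := by
      simp [Prod.ext_iff]
    rw [this, map_add, map_smul, smul_eq_mul, hc_def]
  have hc : c < 0 := by
    have h1 : f (z, F z + 1) < f (z, F z) := hf _ (by simp [hs_def])
    rw [hadd] at h1; linarith
  have hc0 : c ≠ 0 := ne_of_lt hc
  have hkey : ∀ w : EuclideanSpace ℝ (Fin d), f (w, F w) ≤ f (z, F z) := by
    intro w
    refine le_of_forall_pos_le_add ?_
    intro δ hδ
    have hε : (0:ℝ) < δ / (-c) := div_pos hδ (by linarith)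
    have h1 : f (w, F w + δ / (-c)) < f (z, F z) := hf _ (by simp [hs_def]; linarith)
    rw [hadd] at h1
    have h3 : δ / (-c) * c = -δ := by
      rw [div_neg, neg_mul, div_mul_cancel₀ δ hc0]
    linarith [h3 ▸ h1]
  set g := f.comp (ContinuousLinearMap.inl ℝ (EuclideanSpace ℝ (Fin d)) ℝ) with hg_def
  have hfwr : ∀ (w : EuclideanSpace ℝ (Fin d)) (r : ℝ), f (w, r) = g w + r * c := by
    intro w r
    have := hadd w 0 r
    simpa [hg_def, ContinuousLinearMap.inl] using this
  set vg := (InnerProductSpace.toDual ℝ (EuclideanSpace ℝ (Fin d))).symm g with hvg_def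
  have hvg : ∀ w : EuclideanSpace ℝ (Fin d), ⟪vg, w⟫ = g w := by
    intro w; rw [hvg_def]; exact InnerProductSpace.toDual_symm_apply
  refine ⟨(-(c⁻¹)) • vg, fun w => ?_⟩
  have h1 : g w + F w * c ≤ g z + F z * c := by
    have := hkey w; rwa [hfwr, hfwr] at this
  have h2 : ⟪(-(c⁻¹)) • vg, w - z⟫ = -(c⁻¹) * (g w - g z) := by
    rw [real_inner_smul_left, hvg_def]
    congr 1
    rw [← hvg_def, ← hvg w, ← hvg z, ← inner_sub_right]
  rw [h2]
  have h4 : c⁻¹ * (g z + F z * c) ≤ c⁻¹ * (g w + F w * c) :=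
    mul_le_mul_of_nonpos_left h1 (inv_lt_zero.mpr hc).le
  have e1 : c⁻¹ * (g z + F z * c) = c⁻¹ * g z + F z := by
    field_simp
  have e2 : c⁻¹ * (g w + F w * c) = c⁻¹ * g w + F w := by
    field_simp
  have e3 : F z + -c⁻¹ * (g w - g z) = F z + (c⁻¹ * g z - c⁻¹ * g w) := by ring
  rw [e3]
  rw [e1, e2] at h4
  linarith

/-- Bilinearity helper. -/
theorem inner_comb {d : ℕ} (v a b c : EuclideanSpace ℝ (Fin d)) (t : ℝ)
    (h : t • a + (1 - t) • b = c) :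
    t * ⟪v, a⟫ + (1 - t) * ⟪v, b⟫ = ⟪v, c⟫ := by
  rw [← real_inner_smul_right, ← real_inner_smul_right, ← inner_add_right, h]

/-- If `F` is affine at an interior point of the segment, any subgradient there is a common
subgradient at both endpoints. -/
theorem key_mem {d : ℕ} (F : EuclideanSpace ℝ (Fin d) → ℝ)
    (x y : EuclideanSpace ℝ (Fin d)) {t : ℝ} (ht0 : 0 < t) (ht1 : t < 1)
    (heq : t * F x + (1 - t) * F y = F (t • x + (1 - t) • y))
    {v : EuclideanSpace ℝ (Fin d)} (hv : v ∈ subdiff F (t • x + (1 - t) • y)) :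
    v ∈ subdiff F x ∩ subdiff F y := by
  set z := t • x + (1 - t) • y with hz_def
  have hid : t * ⟪v, x - z⟫ + (1 - t) * ⟪v, y - z⟫ = ⟪v, (0 : EuclideanSpace ℝ (Fin d))⟫ :=
    inner_comb v _ _ _ t (by rw [hz_def]; module)
  rw [inner_zero_right] at hid
  have h1 : F z + ⟪v, x - z⟫ ≤ F x := hv x
  have h2 : F z + ⟪v, y - z⟫ ≤ F y := hv y
  have hA : F z + ⟪v, x - z⟫ = F x := by
    nlinarith [mul_le_mul_of_nonneg_left h2 (by linarith : (0:ℝ) ≤ 1 - t)]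
  have hB : F z + ⟪v, y - z⟫ = F y := by
    nlinarith [mul_le_mul_of_nonneg_left h1 ht0.le]
  constructor
  · intro w
    have hw : F z + ⟪v, w - z⟫ ≤ F w := hv w
    have : ⟪v, x - z⟫ + ⟪v, w - x⟫ = ⟪v, w - z⟫ := by
      rw [← inner_add_right]; congr 1; module
    linarith
  · intro w
    have hw : F z + ⟪v, w - z⟫ ≤ F w := hv w
    have : ⟪v, y - z⟫ + ⟪v, w - y⟫ = ⟪v, w - z⟫ := by
      rw [← inner_add_right]; congr 1; module
    linarith

/-- for a convex function `F` and points `x, y`, the five conditions on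
subdifferentials and linearity along the segment `[x, y]` are equivalent. -/
theorem stmt_3 {d : ℕ} (F : EuclideanSpace ℝ (Fin d) → ℝ)
    (hF : ConvexOn ℝ Set.univ F) (x y : EuclideanSpace ℝ (Fin d)) :
    List.TFAE [
      ∀ t : ℝ, 0 < t → t < 1 →
        subdiff F x ∩ subdiff F y = subdiff F (t • x + (1 - t) • y),
      ∃ t : ℝ, 0 < t ∧ t < 1 ∧
        subdiff F x ∩ subdiff F y = subdiff F (t • x + (1 - t) • y),
      (subdiff F x ∩ subdiff F y).Nonempty,
      ∀ t : ℝ, 0 < t → t < 1 →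
        t * F x + (1 - t) * F y = F (t • x + (1 - t) • y),
      ∃ t : ℝ, 0 < t ∧ t < 1 ∧
        t * F x + (1 - t) * F y = F (t • x + (1 - t) • y)] := by
  tfae_have 1 → 2 := by
    intro h
    exact ⟨1/2, by norm_num, by norm_num, h _ (by norm_num) (by norm_num)⟩
  tfae_have 2 → 3 := by
    rintro ⟨t, ht0, ht1, heq⟩
    obtain ⟨v, hv⟩ := subdiff_nonempty F hF (t • x + (1 - t) • y)
    exact ⟨v, heq ▸ hv⟩
  tfae_have 3 → 4 := by
    rintro ⟨v, hvx, hvy⟩ t ht0 ht1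
    set z := t • x + (1 - t) • y with hz_def
    have hcx : F z ≤ t * F x + (1 - t) * F y :=
      hF.2 (Set.mem_univ x) (Set.mem_univ y) ht0.le (by linarith) (by ring)
    have h1 : F x + ⟪v, z - x⟫ ≤ F z := hvx z
    have h2 : F y + ⟪v, z - y⟫ ≤ F z := hvy z
    have hid : t * ⟪v, z - x⟫ + (1 - t) * ⟪v, z - y⟫ = ⟪v, (0 : EuclideanSpace ℝ (Fin d))⟫ :=
      inner_comb v _ _ _ t (by rw [hz_def]; module)
    rw [inner_zero_right] at hid
    nlinarith [mul_le_mul_of_nonneg_left h1 ht0.le,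
      mul_le_mul_of_nonneg_left h2 (by linarith : (0:ℝ) ≤ 1 - t)]
  tfae_have 4 → 5 := by
    intro h
    exact ⟨1/2, by norm_num, by norm_num, h _ (by norm_num) (by norm_num)⟩
  tfae_have 5 → 3 := by
    rintro ⟨t, ht0, ht1, heq⟩
    obtain ⟨v, hv⟩ := subdiff_nonempty F hF (t • x + (1 - t) • y)
    exact ⟨v, key_mem F x y ht0 ht1 heq hv⟩
  tfae_have 4 → 1 := by
    intro h4 t ht0 ht1
    have heq := h4 t ht0 ht1
    set z := t • x + (1 - t) • y with hz_def
    ext v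
    constructor
    · rintro ⟨hvx, hvy⟩ w
      have h1 : F x + ⟪v, w - x⟫ ≤ F w := hvx w
      have h2 : F y + ⟪v, w - y⟫ ≤ F w := hvy w
      have hid : t * ⟪v, w - x⟫ + (1 - t) * ⟪v, w - y⟫ = ⟪v, w - z⟫ :=
        inner_comb v _ _ _ t (by rw [hz_def]; module)
      nlinarith [mul_le_mul_of_nonneg_left h1 ht0.le,
        mul_le_mul_of_nonneg_left h2 (by linarith : (0:ℝ) ≤ 1 - t)]
    · intro hv
      exact key_mem F x y ht0 ht1 heq hv
  tfae_finish
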